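/- Under the stated conditions, ‖(1/2) log(p/p₀)‖²_{P₀,B} ≤ (2 + M) · h(p,p₀)², that is, 2 ∫ (e^{|(1/2)log(p/p₀)|} − 1 − |(1/2)log(p/p₀)|) dP₀ ≤ (2 + M) ∫ (√p − √p₀)² dμ. -/

import Mathlib

/-!
Write `u = √(p₀ / p)`. Relative to `P₀`, the Bernstein integrand is `e^{|log u|} - 1 - |log u|`
and the Hellinger integrand is `(u⁻¹ - 1)²`. Where `u < 1 + 1/(2c) ≤ 3/2`, the lower bound
`log u ≥ 2(u - 1)/(u + 1)` shows that the first is at most the second. On `A_c`, where `u` is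
larger, AM-GM gives `2(e^{|log u|} - 1 - |log u|) + 1/c ≤ (2 + M)(u⁻¹ - 1)² + u²/M`.
Integrating over `A_c` and using `c ∫_{A_c} u² dP₀ ≤ M P₀(A_c)`, the last term is absorbed by
the `1/c` on the left.
-/

open MeasureTheory Real ENNReal

namespace Real

theorem two_mul_sub_one_div_add_one_le_log {u : ℝ} (hu : 1 ≤ u) :
    2 * (u - 1) / (u + 1) ≤ log u := by
  rcases hu.eq_or_lt with rfl | hu
  · simp
  have hsum := hasSum_log_one_add_inv (inv_pos.2 (sub_pos.2 hu))
  have h₁ : 1 + (u - 1)⁻¹⁻¹ = u := by simp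
  have h₂ : 1 / (2 * (u - 1)⁻¹ + 1) = (u - 1) / (u + 1) := by
    field_simp
    ring
  rw [h₁, h₂] at hsum
  simpa [mul_div_assoc] using le_hasSum hsum 0 fun k _ => by
    have : 0 ≤ (u - 1) / (u + 1) := div_nonneg (by linarith) (by linarith)
    positivity

theorem sub_one_sub_log_le_sq_div_add_one {u : ℝ} (hu : 1 ≤ u) :
    u - 1 - log u ≤ (u - 1) ^ 2 / (u + 1) := by
  have h := two_mul_sub_one_div_add_one_le_log hu
  have : (u - 1) ^ 2 / (u + 1) = u - 1 - 2 * (u - 1) / (u + 1) := by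
    field_simp
    ring
  linarith

theorem sub_one_sub_log_le_inv_sub_one_sq {u : ℝ} (hu : 1 ≤ u) (hu' : u ^ 2 ≤ u + 1) :
    u - 1 - log u ≤ (u⁻¹ - 1) ^ 2 := by
  have hu₀ : 0 < u := by linarith
  calc u - 1 - log u ≤ (u - 1) ^ 2 / (u + 1) := sub_one_sub_log_le_sq_div_add_one hu
    _ ≤ (u - 1) ^ 2 / u ^ 2 := by gcongr
    _ = (u⁻¹ - 1) ^ 2 := by field_simp; ring

theorem exp_abs_log_sub_one_sub_abs_log_le {u : ℝ} (hu : 0 < u) (hu' : u ^ 2 ≤ u + 1) :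
    exp |log u| - 1 - |log u| ≤ (u⁻¹ - 1) ^ 2 := by
  rcases le_or_gt 1 u with h1 | h1
  · rw [abs_of_nonneg (log_nonneg h1), exp_log hu]
    exact sub_one_sub_log_le_inv_sub_one_sq h1 hu'
  · have hv : 1 ≤ u⁻¹ := (one_le_inv₀ hu).2 h1.le
    rw [abs_of_neg (log_neg hu h1), ← log_inv, exp_log (inv_pos.2 hu)]
    calc u⁻¹ - 1 - log u⁻¹ ≤ (u⁻¹ - 1) ^ 2 / (u⁻¹ + 1) := sub_one_sub_log_le_sq_div_add_one hv
      _ ≤ (u⁻¹ - 1) ^ 2 := div_le_self (sq_nonneg _) (by linarith)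

theorem min_two_mul_sub_one_one_le {u : ℝ} (hu : 1 ≤ u) :
    min (2 * (u - 1)) 1 ≤ 2 * log u + 2 * (u⁻¹ - 1) ^ 2 := by
  rcases le_or_gt u (3 / 2) with h | h
  · have := sub_one_sub_log_le_inv_sub_one_sq hu (by nlinarith)
    exact (min_le_left _ _).trans (by linarith)
  · have hlog : 2 / 5 ≤ log u := by
      refine le_trans ?_ (two_mul_sub_one_div_add_one_le_log hu)
      rw [le_div_iff₀ (by linarith)]
      linarith
    have hinv : u⁻¹ ≤ 2 / 3 := by
      rw [inv_le_comm₀ (by linarith) (by norm_num)]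
      linarith
    have : 1 / 9 ≤ (u⁻¹ - 1) ^ 2 := by nlinarith
    exact (min_le_right _ _).trans (by linarith)

theorem two_mul_sub_one_sub_log_add_le {u ε M : ℝ} (hu : 1 ≤ u) (hM : 0 < M)
    (hε : ε ≤ min (2 * (u - 1)) 1) :
    2 * (u - 1 - log u) + ε ≤ (2 + M) * (u⁻¹ - 1) ^ 2 + u ^ 2 / M := by
  have hu₀ : 0 < u := by linarith
  -- AM-GM: the geometric mean of `M (u⁻¹ - 1)²` and `u² / M` is `u - 1`
  have amgm : 2 * (u - 1) ≤ M * (u⁻¹ - 1) ^ 2 + u ^ 2 / M := by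
    have : M * (u⁻¹ - 1) ^ 2 + u ^ 2 / M - 2 * (u - 1) = (M * (1 - u⁻¹) - u) ^ 2 / M := by
      field_simp
      ring
    linarith [div_nonneg (sq_nonneg (M * (1 - u⁻¹) - u)) hM.le]
  linarith [min_two_mul_sub_one_one_le hu]

end Real

theorem half_log_div_eq_neg_log_sqrt_div {a b : ℝ} (ha : 0 ≤ a) (hb : 0 ≤ b) :
    1 / 2 * log (a / b) = -log √(b / a) := by
  rw [log_sqrt (div_nonneg hb ha), ← inv_div a b, Real.log_inv]
  ring

theorem sq_sqrt_sub_sqrt_div_eq {a b : ℝ} (ha : 0 < a) (hb : 0 < b) :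
    (√a - √b) ^ 2 / b = ((√(b / a))⁻¹ - 1) ^ 2 := by
  rw [sqrt_div' _ ha.le, inv_div, div_sub_one (sqrt_pos.2 hb).ne', div_pow, sq_sqrt hb.le]

theorem exp_abs_half_log_div_le_of_lt {a b c : ℝ} (ha : 0 < a) (hb : 0 < b) (hc : 1 ≤ c)
    (h : b / a < (1 + 1 / (2 * c)) ^ 2) :
    exp |1 / 2 * log (a / b)| - 1 - |1 / 2 * log (a / b)| ≤ (√a - √b) ^ 2 / b := by
  have hu : √(b / a) < 1 + 1 / (2 * c) := (sqrt_lt' (by positivity)).2 h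
  have : 1 / (2 * c) ≤ 1 / 2 := by gcongr; linarith
  rw [half_log_div_eq_neg_log_sqrt_div ha.le hb.le, abs_neg, sq_sqrt_sub_sqrt_div_eq ha hb]
  exact exp_abs_log_sub_one_sub_abs_log_le (sqrt_pos.2 (div_pos hb ha))
    (by nlinarith [sqrt_nonneg (b / a)])

theorem two_mul_exp_abs_half_log_div_add_le_of_le {a b c M : ℝ} (ha : 0 < a) (hb : 0 < b)
    (hc : 1 ≤ c) (hM : 0 < M) (h : (1 + 1 / (2 * c)) ^ 2 ≤ b / a) :
    2 * (exp |1 / 2 * log (a / b)| - 1 - |1 / 2 * log (a / b)|) + 1 / c ≤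
      (2 + M) * ((√a - √b) ^ 2 / b) + b / a / M := by
  have hu : 1 + 1 / (2 * c) ≤ √(b / a) := (le_sqrt (by positivity) (by positivity)).2 h
  have hc_le_one : 1 / c ≤ 1 := by rw [div_le_one (by linarith)]; exact hc
  have hc_eq : 1 / c = 2 * (1 / (2 * c)) := by field_simp
  have hu₁ : 1 ≤ √(b / a) := le_trans (by simp; positivity) hu
  rw [half_log_div_eq_neg_log_sqrt_div ha.le hb.le, abs_neg, sq_sqrt_sub_sqrt_div_eq ha hb,
    abs_of_nonneg (log_nonneg hu₁), Real.exp_log (by linarith)]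
  have key := two_mul_sub_one_sub_log_add_le hu₁ hM (le_min (by linarith) hc_le_one)
  rwa [sq_sqrt (div_pos hb ha).le] at key

theorem two_mul_ofReal_exp_abs_half_log_div_add_le_of_le {a b c M : ℝ} (ha : 0 < a)
    (hb : 0 < b) (hc : 1 ≤ c) (hM : 0 < M) (h : (1 + 1 / (2 * c)) ^ 2 ≤ b / a) :
    2 * ENNReal.ofReal (exp |1 / 2 * log (a / b)| - 1 - |1 / 2 * log (a / b)|) +
        ENNReal.ofReal (1 / c) ≤
      ENNReal.ofReal (2 + M) * ENNReal.ofReal ((√a - √b) ^ 2 / b) +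
        ENNReal.ofReal (1 / M) * ENNReal.ofReal (b / a) := by
  have hF : 0 ≤ exp |1 / 2 * log (a / b)| - 1 - |1 / 2 * log (a / b)| := by
    linarith [add_one_le_exp |1 / 2 * log (a / b)|]
  have key := two_mul_exp_abs_half_log_div_add_le_of_le ha hb hc hM h
  rw [show b / a / M = 1 / M * (b / a) by ring] at key
  have hc₀ : 0 < c := by linarith
  rw [← ENNReal.ofReal_ofNat, ← ENNReal.ofReal_mul zero_le_two, ← ENNReal.ofReal_add (by positivity)
    (by positivity), ← ENNReal.ofReal_mul (by positivity), ← ENNReal.ofReal_mul (by positivity),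
    ← ENNReal.ofReal_add (by positivity) (by positivity)]
  exact ENNReal.ofReal_le_ofReal key

theorem ENNReal.ofReal_one_div_mul_le_of_mul_le {c M : ℝ} {x y : ℝ≥0∞} (hc : 0 < c) (hM : 0 < M)
    (h : ENNReal.ofReal c * x ≤ ENNReal.ofReal M * y) :
    ENNReal.ofReal (1 / M) * x ≤ ENNReal.ofReal (1 / c) * y := by
  have one_div_mul_self {t : ℝ} (ht : 0 < t) : ENNReal.ofReal (1 / t) * ENNReal.ofReal t = 1 := by
    rw [← ENNReal.ofReal_mul (by positivity), one_div_mul_cancel ht.ne', ENNReal.ofReal_one]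
  calc ENNReal.ofReal (1 / M) * x
      = ENNReal.ofReal (1 / M) * ENNReal.ofReal (1 / c) * (ENNReal.ofReal c * x) := by
        rw [mul_assoc, ← mul_assoc (ENNReal.ofReal (1 / c)), one_div_mul_self hc, one_mul]
    _ ≤ ENNReal.ofReal (1 / M) * ENNReal.ofReal (1 / c) * (ENNReal.ofReal M * y) :=
        mul_le_mul_right h _
    _ = ENNReal.ofReal (1 / c) * y := by
        rw [mul_comm (ENNReal.ofReal (1 / M)), mul_assoc, ← mul_assoc (ENNReal.ofReal (1 / M)),
          one_div_mul_self hM, one_mul]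

section Lintegral

variable {X : Type*} [MeasurableSpace X] {μ : Measure X}

theorem lintegral_withDensity_ofReal_div_le {f g : X → ℝ} (hg : Measurable g) (hg₀ : ∀ x, 0 ≤ g x) :
    ∫⁻ x, ENNReal.ofReal (f x / g x) ∂μ.withDensity (fun x => ENNReal.ofReal (g x)) ≤
      ∫⁻ x, ENNReal.ofReal (f x) ∂μ := by
  refine (lintegral_withDensity_le_lintegral_mul μ hg.ennreal_ofReal _).trans
    (lintegral_mono fun x => ?_)
  rw [Pi.mul_apply, ← ENNReal.ofReal_mul (hg₀ x)]
  rcases eq_or_ne (g x) 0 with h | h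
  · simp [h]
  · rw [mul_div_cancel₀ _ h]

theorem lintegral_le_of_ae_add_indicator_le {f g h : X → ℝ≥0∞} {s : Set X} {a : ℝ≥0∞}
    (hs : MeasurableSet s) (hh : Measurable h) (ha : a * μ s ≠ ∞)
    (hfg : ∀ᵐ x ∂μ, f x + s.indicator (fun _ => a) x ≤ g x + s.indicator h x)
    (hint : ∫⁻ x in s, h x ∂μ ≤ a * μ s) :
    ∫⁻ x, f x ∂μ ≤ ∫⁻ x, g x ∂μ := by
  refine (ENNReal.add_le_add_iff_right ha).1 ?_
  calc ∫⁻ x, f x ∂μ + a * μ s = ∫⁻ x, f x + s.indicator (fun _ => a) x ∂μ := by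
        rw [lintegral_add_right _ (measurable_const.indicator hs), lintegral_indicator_const hs]
    _ ≤ ∫⁻ x, g x + s.indicator h x ∂μ := lintegral_mono_ae hfg
    _ = ∫⁻ x, g x ∂μ + ∫⁻ x in s, h x ∂μ := by
        rw [lintegral_add_right _ (hh.indicator hs), lintegral_indicator hs]
    _ ≤ ∫⁻ x, g x ∂μ + a * μ s := by gcongr

theorem ae_withDensity_ofReal_pos {g : X → ℝ} (hg : Measurable g) :
    ∀ᵐ x ∂μ.withDensity (fun x => ENNReal.ofReal (g x)), 0 < g x := by
  rw [ae_withDensity_iff hg.ennreal_ofReal]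
  exact ae_of_all _ fun x hx => ENNReal.ofReal_pos.1 (pos_iff_ne_zero.2 hx)

theorem le_of_mul_setLIntegral_le {f : X → ℝ≥0∞} {s : Set X} {a b : ℝ≥0∞} (hf : Measurable f)
    (hf₁ : ∀ x ∈ s, 1 ≤ f x) (hs₀ : μ s ≠ 0) (hs : μ s ≠ ∞)
    (h : a * ∫⁻ x in s, f x ∂μ ≤ b * μ s) : a ≤ b := by
  refine (ENNReal.mul_le_mul_iff_left hs₀ hs).1 ?_
  calc a * μ s = a * ∫⁻ _ in s, 1 ∂μ := by rw [setLIntegral_const, one_mul]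
    _ ≤ a * ∫⁻ x in s, f x ∂μ := mul_le_mul_right (setLIntegral_mono hf hf₁) _
    _ ≤ b * μ s := h

theorem two_mul_lintegral_exp_abs_half_log_div_le {ν : Measure X} [IsFiniteMeasure ν]
    {p p₀ : X → ℝ} (hp : Measurable p) (hp₀ : Measurable p₀)
    (hpos : ∀ᵐ x ∂ν, 0 < p x ∧ 0 < p₀ x) {c M : ℝ} (hc : 1 ≤ c) (hM : 0 ≤ M)
    (hMb : ν {x | (1 + 1 / (2 * c)) ^ 2 ≤ p₀ x / p x} = 0 ∨
      ENNReal.ofReal c * ∫⁻ x in {x | (1 + 1 / (2 * c)) ^ 2 ≤ p₀ x / p x},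
          ENNReal.ofReal (p₀ x / p x) ∂ν ≤
        ENNReal.ofReal M * ν {x | (1 + 1 / (2 * c)) ^ 2 ≤ p₀ x / p x}) :
    2 * ∫⁻ x, ENNReal.ofReal (exp |1 / 2 * log (p x / p₀ x)| - 1 - |1 / 2 * log (p x / p₀ x)|) ∂ν ≤
      ENNReal.ofReal (2 + M) * ∫⁻ x, ENNReal.ofReal ((√(p x) - √(p₀ x)) ^ 2 / p₀ x) ∂ν := by
  set B := {x | (1 + 1 / (2 * c)) ^ 2 ≤ p₀ x / p x}
  set F := fun x => exp |1 / 2 * log (p x / p₀ x)| - 1 - |1 / 2 * log (p x / p₀ x)|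
  set H := fun x => (√(p x) - √(p₀ x)) ^ 2 / p₀ x
  have hB : MeasurableSet B := measurableSet_le measurable_const (hp₀.div hp)
  have hR : Measurable fun x => ENNReal.ofReal (p₀ x / p x) := (hp₀.div hp).ennreal_ofReal
  have hout : ∀ᵐ x ∂ν, x ∉ B →
      2 * ENNReal.ofReal (F x) ≤ ENNReal.ofReal (2 + M) * ENNReal.ofReal (H x) := by
    filter_upwards [hpos] with x ⟨hx, hx₀⟩ hxB
    gcongr
    · rw [← ENNReal.ofReal_ofNat]; gcongr; linarith
    · exact exp_abs_half_log_div_le_of_lt hx hx₀ hc (not_le.1 hxB)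
  rw [← lintegral_const_mul' _ _ (ofNat_ne_top (n := 2)), ← lintegral_const_mul' _ _ ofReal_ne_top]
  rcases eq_or_ne (ν B) 0 with hB0 | hB0
  · exact lintegral_mono_ae <|
      (measure_eq_zero_iff_ae_notMem.1 hB0).mp (hout.mono fun x h hx => h hx)
  have hMb := hMb.resolve_left hB0
  have hcM : c ≤ M := by
    refine (ENNReal.ofReal_le_ofReal_iff'.1 (le_of_mul_setLIntegral_le hR (fun x hx => ?_) hB0
      (measure_ne_top _ _) hMb)).resolve_right (by linarith)
    exact ENNReal.one_le_ofReal.2 ((one_le_pow₀ (by simp; positivity)).trans hx)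
  have hMpos : 0 < M := by linarith
  refine lintegral_le_of_ae_add_indicator_le (a := ENNReal.ofReal (1 / c)) hB
    (hR.const_mul (ENNReal.ofReal (1 / M))) (mul_ne_top ofReal_ne_top (measure_ne_top _ _)) ?_ ?_
  · filter_upwards [hpos, hout] with x ⟨hx, hx₀⟩ hxout
    by_cases hxB : x ∈ B
    · simpa only [Set.indicator_of_mem hxB]
        using two_mul_ofReal_exp_abs_half_log_div_add_le_of_le hx hx₀ hc hMpos hxB
    · simpa only [Set.indicator_of_notMem hxB, add_zero] using hxout hxB
  · rw [lintegral_const_mul _ hR]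
    exact ENNReal.ofReal_one_div_mul_le_of_mul_le (by linarith) hMpos hMb

end Lintegral

theorem bernstein_norm_half_log_ratio_le_hellinger_general
    {X : Type*} [MeasurableSpace X] (μ : Measure X)
    (p p₀ : X → ℝ) (hp : Measurable p) (hp₀ : Measurable p₀)
    (hpnn : ∀ x, 0 ≤ p x) (hp₀nn : ∀ x, 0 ≤ p₀ x)
    (hp₀den : ∫⁻ x, ENNReal.ofReal (p₀ x) ∂μ = 1)
    (P₀ : Measure X) (hP₀ : P₀ = μ.withDensity fun x => ENNReal.ofReal (p₀ x))
    (hzero : P₀ {x | p x = 0} = 0)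
    (M : ℝ) (hM : 0 ≤ M)
    (hMbound : ∃ c : ℝ, 1 ≤ c ∧
      (P₀ {x | (1 + 1 / (2 * c)) ^ 2 ≤ p₀ x / p x} = 0 ∨
        ENNReal.ofReal c *
            (∫⁻ x in {x | (1 + 1 / (2 * c)) ^ 2 ≤ p₀ x / p x},
              ENNReal.ofReal (p₀ x / p x) ∂P₀) ≤
          ENNReal.ofReal M * P₀ {x | (1 + 1 / (2 * c)) ^ 2 ≤ p₀ x / p x})) :
    2 * ∫⁻ x, ENNReal.ofReal
          (Real.exp |1 / 2 * Real.log (p x / p₀ x)| - 1 -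
            |1 / 2 * Real.log (p x / p₀ x)|) ∂P₀ ≤
      ENNReal.ofReal (2 + M) *
        ∫⁻ x, ENNReal.ofReal ((Real.sqrt (p x) - Real.sqrt (p₀ x)) ^ 2) ∂μ := by
  obtain ⟨c, hc, hMb⟩ := hMbound
  have : IsFiniteMeasure P₀ := hP₀ ▸ isFiniteMeasure_withDensity (by simp [hp₀den])
  have hpos : ∀ᵐ x ∂P₀, 0 < p x ∧ 0 < p₀ x := by
    filter_upwards [measure_eq_zero_iff_ae_notMem.1 hzero, hP₀ ▸ ae_withDensity_ofReal_pos hp₀]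
      with x hx hx₀
    exact ⟨(hpnn x).lt_of_ne' hx, hx₀⟩
  exact (two_mul_lintegral_exp_abs_half_log_div_le hp hp₀ hpos hc hM hMb).trans
    (mul_le_mul_right (hP₀ ▸ lintegral_withDensity_ofReal_div_le hp₀ hp₀nn) _)

/-- Under the stated conditions, the Bernstein-norm bound
`‖(1/2) log(p/p₀)‖²_{P₀,B} ≤ (2 + M) h(p,p₀)²`, i.e.
`2 ∫ (e^{|(1/2)log(p/p₀)|} - 1 - |(1/2)log(p/p₀)|) dP₀ ≤ (2 + M) ∫ (√p - √p₀)² dμ`. -/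
theorem bernstein_norm_half_log_ratio_le_hellinger
    {X : Type*} [MeasurableSpace X] (μ : Measure X) [SigmaFinite μ]
    (p p₀ : X → ℝ) (hp : Measurable p) (hp₀ : Measurable p₀)
    (hpnn : ∀ x, 0 ≤ p x) (hp₀nn : ∀ x, 0 ≤ p₀ x)
    (hpden : ∫⁻ x, ENNReal.ofReal (p x) ∂μ = 1)
    (hp₀den : ∫⁻ x, ENNReal.ofReal (p₀ x) ∂μ = 1)
    (P₀ : Measure X) (hP₀ : P₀ = μ.withDensity fun x => ENNReal.ofReal (p₀ x))
    (hzero : P₀ {x | p x = 0} = 0)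
    (hfin : ∫⁻ x, ENNReal.ofReal (p₀ x / p x) ∂P₀ < ⊤)
    (M : ℝ) (hM : 0 ≤ M)
    (hMbound : ∃ c : ℝ, 1 ≤ c ∧
      (P₀ {x | (1 + 1 / (2 * c)) ^ 2 ≤ p₀ x / p x} = 0 ∨
        ENNReal.ofReal c *
            (∫⁻ x in {x | (1 + 1 / (2 * c)) ^ 2 ≤ p₀ x / p x},
              ENNReal.ofReal (p₀ x / p x) ∂P₀) ≤
          ENNReal.ofReal M * P₀ {x | (1 + 1 / (2 * c)) ^ 2 ≤ p₀ x / p x})) :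
    2 * ∫⁻ x, ENNReal.ofReal
          (Real.exp |1 / 2 * Real.log (p x / p₀ x)| - 1 -
            |1 / 2 * Real.log (p x / p₀ x)|) ∂P₀ ≤
      ENNReal.ofReal (2 + M) *
        ∫⁻ x, ENNReal.ofReal ((Real.sqrt (p x) - Real.sqrt (p₀ x)) ^ 2) ∂μ :=
  bernstein_norm_half_log_ratio_le_hellinger_general μ p p₀ hp hp₀ hpnn hp₀nn hp₀den P₀ hP₀ hzero M
    hM hMbound
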